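/- Let λ ∈ ℂ and a, N ∈ ℕ with a ≥ 2N, and set c := ∏_{r=⌊(a−2N+1)/2⌋}^{⌊(a−N+1)/2⌋−1}(λ+N−1+r). For any q⁻, q⁺ ∈ ℂ, the equality of polynomials c·q⁻·C̃_{a−N}^{λ+N−1}(it) = q⁺·C̃_{a−N}^{λ+N−1}(it) in ℂ[t] holds if and only if c·q⁻ = q⁺. In particular, C̃_{a−N}^{λ+N−1}(it) is a non-zero polynomial for every λ ∈ ℂ. -/

import Mathlib

noncomputable section

/-- The renormalized Gegenbauer polynomial `C̃_ℓ^μ(z)` (zero for `ℓ < 0`). -/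
def GegenC (μ : ℂ) (l : ℤ) : Polynomial ℂ :=
  if l < 0 then 0 else
    ∑ k ∈ Finset.range (l.toNat / 2 + 1),
      Polynomial.C ((∏ r ∈ Finset.Ico ((l.toNat + 1) / 2) (l.toNat - k), (μ + (r : ℂ))) *
          ((-1) ^ k / ((Nat.factorial k : ℂ) * (Nat.factorial (l.toNat - 2 * k) : ℂ)))) *
        (Polynomial.C 2 * Polynomial.X) ^ (l.toNat - 2 * k)

/-- `C̃_ℓ^μ(it)`, i.e. the substitution `z = it`. -/
def GegenIt (μ : ℂ) (l : ℤ) : Polynomial ℂ :=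
  (GegenC μ l).comp (Polynomial.C Complex.I * Polynomial.X)

lemma gegenC_ne_zero (μ : ℂ) (m : ℕ) : GegenC μ (m : ℤ) ≠ 0 := by
  intro h
  have hc : (GegenC μ (m : ℤ)).coeff (m % 2) = 0 := by rw [h]; simp
  rw [GegenC, if_neg (by omega)] at hc
  simp only [Int.toNat_natCast] at hc
  rw [Polynomial.finset_sum_coeff] at hc
  rw [Finset.sum_eq_single (m / 2)] at hc
  · have hIco : Finset.Ico ((m + 1) / 2) (m - m / 2) = ∅ := by
      apply Finset.Ico_eq_empty
      omega
    have h2 : m - 2 * (m / 2) = m % 2 := by omega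
    rw [hIco, h2] at hc
    simp only [Finset.prod_empty, one_mul, Polynomial.coeff_C_mul, mul_pow,
      ← Polynomial.C_pow, Polynomial.coeff_C_mul, Polynomial.coeff_X_pow, if_pos rfl,
      ↓reduceIte, mul_one] at hc
    have h1 : ((-1 : ℂ)) ^ (m / 2) ≠ 0 := by
      apply pow_ne_zero; norm_num
    have h2 : ((Nat.factorial (m / 2) : ℂ) * (Nat.factorial (m % 2) : ℂ)) ≠ 0 :=
      mul_ne_zero (Nat.cast_ne_zero.mpr (Nat.factorial_ne_zero _))
        (Nat.cast_ne_zero.mpr (Nat.factorial_ne_zero _))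
    have h3 : ((2 : ℂ)) ^ (m % 2) ≠ 0 := pow_ne_zero _ two_ne_zero
    field_simp at hc
    exact mul_ne_zero h1 h3 ((div_eq_zero_iff.mp hc).resolve_right h2)
  · intro k hk hne
    simp only [Polynomial.coeff_C_mul, mul_pow, ← Polynomial.C_pow,
      Polynomial.coeff_C_mul, Polynomial.coeff_X_pow]
    rw [if_neg (by simp at hk; omega)]
    ring
  · intro h
    exact absurd (Finset.self_mem_range_succ (m / 2)) h

lemma gegenIt_ne_zero (μ : ℂ) (m : ℕ) : GegenIt μ (m : ℤ) ≠ 0 := by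
  intro h
  apply gegenC_ne_zero μ m
  have hcomp : ((GegenC μ (m : ℤ)).comp (Polynomial.C Complex.I * Polynomial.X)).comp
      (Polynomial.C Complex.I⁻¹ * Polynomial.X) = GegenC μ (m : ℤ) := by
    rw [Polynomial.comp_assoc]
    have : (Polynomial.C Complex.I * Polynomial.X).comp
        (Polynomial.C Complex.I⁻¹ * Polynomial.X) = Polynomial.X := by
      simp only [Polynomial.mul_comp, Polynomial.C_comp, Polynomial.X_comp, ← mul_assoc,
        ← Polynomial.C_mul, mul_inv_cancel₀ Complex.I_ne_zero, Polynomial.C_1, one_mul]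
    rw [this, Polynomial.comp_X]
  rw [← hcomp]
  rw [show (GegenC μ (m:ℤ)).comp (Polynomial.C Complex.I * Polynomial.X) = GegenIt μ (m:ℤ) from rfl, h]
  simp

/-- the compatibility condition between the plus- and minus-side
normalizing constants, and non-vanishing of `C̃_{a-N}^{λ+N-1}(it)`. -/
theorem statement11 (lam : ℂ) (a N : ℕ) (h2N : 2 * N ≤ a) :
    (∀ qm qp : ℂ,
      (Polynomial.C ((∏ r ∈ Finset.Ico (((a : ℤ) - 2 * N + 1) / 2) (((a : ℤ) - N + 1) / 2),
            (lam + (N : ℂ) - 1 + (r : ℂ))) * qm) *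
          GegenIt (lam + (N : ℂ) - 1) ((a : ℤ) - N) =
        Polynomial.C qp * GegenIt (lam + (N : ℂ) - 1) ((a : ℤ) - N)) ↔
      (∏ r ∈ Finset.Ico (((a : ℤ) - 2 * N + 1) / 2) (((a : ℤ) - N + 1) / 2),
          (lam + (N : ℂ) - 1 + (r : ℂ))) * qm = qp) ∧
    GegenIt (lam + (N : ℂ) - 1) ((a : ℤ) - N) ≠ 0 := by
  have hl : ((a : ℤ) - N) = ((a - N : ℕ) : ℤ) := by omega
  have hne : GegenIt (lam + (N : ℂ) - 1) ((a : ℤ) - N) ≠ 0 := by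
    rw [hl]; exact gegenIt_ne_zero _ _
  refine ⟨fun qm qp => ⟨fun h => ?_, fun h => by rw [h]⟩, hne⟩
  have := mul_right_cancel₀ hne h
  exact Polynomial.C_injective this
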